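/- arXiv:2605.04921 — 3 statements merged into one kernel-verified Lean document; each statement's English description precedes it below -/
import Mathlib

section
/- Let n and l be positive integers, let W be a real n×l matrix, let θ̂ₛ > 0, let b ∈ ℝⁿ, and for each i ∈ {1,…,l} set δᵢ = (WᵀW)ᵢᵢ − Σ_{j≠i}|(WᵀW)ᵢⱼ|. Suppose λ > 0 satisfies λ + min_i δᵢ > 0 and λ ≥ ‖Wᵀb‖_∞/θ̂ₛ − min_i δᵢ. Then the penalized estimator Ĉ = (WᵀW + λI)⁻¹Wᵀb satisfies ‖Ĉ‖_∞ ≤ θ̂ₛ. -/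
open Matrix Finset

/-- With `δᵢ = (WᵀW)ᵢᵢ − Σ_{j≠i}|(WᵀW)ᵢⱼ|`, if `λ > 0` satisfies
`λ + min_i δᵢ > 0` and `λ ≥ ‖Wᵀb‖_∞/θ̂ₛ − min_i δᵢ`, then the penalized estimator
`Ĉ = (WᵀW + λI)⁻¹Wᵀb` satisfies `‖Ĉ‖_∞ ≤ θ̂ₛ`. -/
theorem stmt_3 (n l : ℕ) (hn : 0 < n) (hl : 0 < l)
    (hne : (Finset.univ : Finset (Fin l)).Nonempty)
    (W : Matrix (Fin n) (Fin l) ℝ) (b : Fin n → ℝ)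
    (θs : ℝ) (hθs : 0 < θs)
    (δ : Fin l → ℝ)
    (hδ : ∀ i : Fin l,
      δ i = (Wᵀ * W) i i - ∑ j ∈ Finset.univ.erase i, |(Wᵀ * W) i j|)
    (lam : ℝ) (hlam : 0 < lam)
    (hpos : 0 < lam + Finset.univ.inf' hne δ)
    (hbound : (Finset.univ.sup' hne fun i => |Wᵀ.mulVec b i|) / θs
        - Finset.univ.inf' hne δ ≤ lam) :
    Finset.univ.sup' hne (fun i =>
        |(Wᵀ * W + lam • (1 : Matrix (Fin l) (Fin l) ℝ))⁻¹.mulVec (Wᵀ.mulVec b) i|)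
      ≤ θs := by
  set A : Matrix (Fin l) (Fin l) ℝ := Wᵀ * W with hA
  set M : Matrix (Fin l) (Fin l) ℝ := A + lam • 1 with hM
  set c : Fin l → ℝ := Wᵀ.mulVec b with hc
  set m : ℝ := Finset.univ.inf' hne δ with hm
  by_cases hunit : IsUnit M.det
  · set x : Fin l → ℝ := M⁻¹.mulVec c with hx
    have hMx : M.mulVec x = c := by
      rw [hx, Matrix.mulVec_mulVec, Matrix.mul_nonsing_inv _ hunit, Matrix.one_mulVec]
    obtain ⟨i, _, hieq⟩ := Finset.exists_mem_eq_sup' hne (fun j => |x j|)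
    apply Finset.sup'_le
    intro q _
    have hji : |x q| ≤ |x i| := by
      rw [← hieq]; exact Finset.le_sup' (fun j => |x j|) (Finset.mem_univ q)
    have hXnonneg : (0:ℝ) ≤ |x i| := abs_nonneg _
    -- diagonal entries of A are nonneg
    have hAii : 0 ≤ A i i := by
      have : A i i = ∑ k, (W k i)^2 := by
        simp [hA, Matrix.mul_apply, Matrix.transpose_apply, sq]
      rw [this]; positivity
    have hMii : M i i = A i i + lam := by
      simp [hM, Matrix.add_apply, Matrix.one_apply_eq]
    have hMoff : ∀ j ∈ Finset.univ.erase i, M i j = A i j := by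
      intro j hj
      have hne' : j ≠ i := Finset.ne_of_mem_erase hj
      simp [hM, Matrix.add_apply, Matrix.one_apply, hne'.symm]
    -- key inequality
    have hci : c i = M i i * x i + ∑ j ∈ Finset.univ.erase i, M i j * x j := by
      have : c i = ∑ j, M i j * x j := by
        rw [← hMx]; simp [Matrix.mulVec, dotProduct]
      rw [this, ← Finset.add_sum_erase _ _ (Finset.mem_univ i)]
    have habs : ∑ j ∈ Finset.univ.erase i, |M i j * x j|
        ≤ (∑ j ∈ Finset.univ.erase i, |A i j|) * |x i| := by
      rw [Finset.sum_mul]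
      apply Finset.sum_le_sum
      intro j hj
      rw [hMoff j hj, abs_mul]
      have hxj : |x j| ≤ |x i| := by
        rw [← hieq]; exact Finset.le_sup' (fun k => |x k|) (Finset.mem_univ j)
      exact mul_le_mul_of_nonneg_left hxj (abs_nonneg _)
    have hsumabs : |∑ j ∈ Finset.univ.erase i, M i j * x j|
        ≤ (∑ j ∈ Finset.univ.erase i, |A i j|) * |x i| :=
      (Finset.abs_sum_le_sum_abs _ _).trans habs
    have hkey : (δ i + lam) * |x i| ≤ |c i| := by
      have h1 : |M i i * x i| - |∑ j ∈ Finset.univ.erase i, M i j * x j| ≤ |c i| := by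
        rw [hci]
        have := abs_add_le (M i i * x i + ∑ j ∈ Finset.univ.erase i, M i j * x j)
          (-(∑ j ∈ Finset.univ.erase i, M i j * x j))
        simp only [add_neg_cancel_right, abs_neg] at this
        linarith
      have h2 : |M i i * x i| = (A i i + lam) * |x i| := by
        rw [abs_mul, hMii, abs_of_nonneg (by linarith)]
      have h3 := hδ i
      nlinarith [hsumabs]
    have hcisup : |c i| ≤ Finset.univ.sup' hne (fun k => |c k|) :=
      Finset.le_sup' (fun k => |c k|) (Finset.mem_univ i)
    have hsupbound : Finset.univ.sup' hne (fun k => |c k|) ≤ θs * (lam + m) := by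
      have := hbound
      rw [div_sub' (ne_of_gt hθs), div_le_iff₀ hθs] at this
      · linarith [this]
    have hmδ : m ≤ δ i := Finset.inf'_le δ (Finset.mem_univ i)
    have hfin : (lam + m) * |x i| ≤ θs * (lam + m) := by
      nlinarith
    have hxi : |x i| ≤ θs := by
      have := (mul_le_mul_iff_of_pos_right hpos).mp (by linarith [hfin] : |x i| * (lam + m) ≤ θs * (lam + m))
      exact this
    calc |x q| ≤ |x i| := hji
      _ ≤ θs := hxi
  · have : M⁻¹ = 0 := Matrix.nonsing_inv_apply_not_isUnit M hunit
    apply Finset.sup'_le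
    intro q _
    rw [this]
    simp [Matrix.zero_mulVec]
    exact hθs.le
end

section
/- Let θₛ > 0 and θᵣ > 0, and define the 'linear with sill' moving-average kernel g(r) = √(θₛ/θᵣ) · 𝟙_{[0,θᵣ]}(r) for r ≥ 0, normalized so that ∫₀^∞ g(r)² dr = θₛ. Then for every h with 0 ≤ h ≤ θᵣ, ∫₀^∞ g(r) g(r+h) dr = θₛ (1 − h/θᵣ), and for every h > θᵣ, ∫₀^∞ g(r) g(r+h) dr = 0. -/
open MeasureTheory Set

lemma stmt7_aux (θs θr h : ℝ) (hθs : 0 < θs) (hθr : 0 < θr)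
    (hh : 0 ≤ h) (hhr : h ≤ θr)
    (g : ℝ → ℝ)
    (hg : ∀ r : ℝ, g r = (Icc (0 : ℝ) θr).indicator (fun _ => Real.sqrt (θs / θr)) r) :
    (∫ r in Ioi (0 : ℝ), g r * g (r + h)) = θs / θr * (θr - h) := by
  have hdiv : (0:ℝ) ≤ θs / θr := le_of_lt (div_pos hθs hθr)
  have heq : EqOn (fun r => g r * g (r + h))
      ((Ioc 0 (θr - h)).indicator (fun _ => θs / θr)) (Ioi (0:ℝ)) := by
    intro r hr
    simp only [mem_Ioi] at hr
    simp only [hg, indicator]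
    by_cases h1 : r ∈ Icc (0:ℝ) θr
    · by_cases h2 : r + h ∈ Icc (0:ℝ) θr
      · have : r ∈ Ioc 0 (θr - h) := ⟨hr, by linarith [h2.2]⟩
        simp [h1, h2, this, Real.mul_self_sqrt hdiv]
      · have : r ∉ Ioc 0 (θr - h) := by
          intro hc
          exact h2 ⟨by linarith, by linarith [hc.2]⟩
        simp [h1, h2, this]
    · have : r ∉ Ioc 0 (θr - h) := by
        intro hc
        exact h1 ⟨le_of_lt hr, by linarith [hc.2]⟩
      simp [h1, this]
  rw [setIntegral_congr_fun measurableSet_Ioi heq,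
    integral_indicator measurableSet_Ioc,
    Measure.restrict_restrict measurableSet_Ioc]
  have : Ioc (0:ℝ) (θr - h) ∩ Ioi 0 = Ioc 0 (θr - h) := by
    ext x; simp (config := {contextual := true}) [and_comm]
  rw [this, setIntegral_const, measureReal_def, Real.volume_Ioc, smul_eq_mul,
    ENNReal.toReal_ofReal (by linarith)]
  ring

/-- For the 'linear with sill' moving-average kernel
`g(r) = √(θₛ/θᵣ)·𝟙_{[0,θᵣ]}(r)`, normalized so that `∫₀^∞ g² = θₛ`, the induced
covariance is `∫₀^∞ g(r)g(r+h) dr = θₛ(1 − h/θᵣ)` for `0 ≤ h ≤ θᵣ` and `0` for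
`h > θᵣ`. -/
theorem stmt_7 (θs θr : ℝ) (hθs : 0 < θs) (hθr : 0 < θr)
    (g : ℝ → ℝ)
    (hg : ∀ r : ℝ, g r = (Icc (0 : ℝ) θr).indicator (fun _ => Real.sqrt (θs / θr)) r) :
    (∫ r in Ioi (0 : ℝ), g r ^ 2) = θs ∧
    (∀ h : ℝ, 0 ≤ h → h ≤ θr →
      (∫ r in Ioi (0 : ℝ), g r * g (r + h)) = θs * (1 - h / θr)) ∧
    (∀ h : ℝ, θr < h → (∫ r in Ioi (0 : ℝ), g r * g (r + h)) = 0) := by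
  refine ⟨?_, ?_, ?_⟩
  · have := stmt7_aux θs θr 0 hθs hθr le_rfl (le_of_lt hθr) g hg
    simp only [add_zero] at this
    have h2 : (∫ r in Ioi (0 : ℝ), g r ^ 2) = ∫ r in Ioi (0 : ℝ), g r * g r := by
      congr 1; ext r; ring
    rw [h2, this]
    field_simp
    ring
  · intro h hh hhr
    rw [stmt7_aux θs θr h hθs hθr hh hhr g hg]
    field_simp
  · intro h hh
    have heq : EqOn (fun r => g r * g (r + h)) (fun _ => (0:ℝ)) (Ioi (0:ℝ)) := by
      intro r hr
      simp only [mem_Ioi] at hr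
      have : r + h ∉ Icc (0:ℝ) θr := by
        intro hc
        linarith [hc.2]
      simp [hg, indicator, this]
    rw [setIntegral_congr_fun measurableSet_Ioi heq]
    simp
end

section
/- Let θₛ > 0 and θᵣ > 0, and define the 'spherical' moving-average kernel g(r) = √(3θₛ/θᵣ) (1 − r/θᵣ) · 𝟙_{[0,θᵣ]}(r) for r ≥ 0, normalized so that ∫₀^∞ g(r)² dr = θₛ. Then for every h with 0 ≤ h ≤ θᵣ, ∫₀^∞ g(r) g(r+h) dr = θₛ (1 − (3/2)(h/θᵣ) + (1/2)(h/θᵣ)³), and for every h > θᵣ, ∫₀^∞ g(r) g(r+h) dr = 0. -/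
open MeasureTheory Set

set_option maxHeartbeats 1000000 in
lemma cov_helper (θs θr : ℝ) (hθs : 0 < θs) (hθr : 0 < θr)
    (g : ℝ → ℝ)
    (hg : ∀ r : ℝ,
      g r = (Icc (0 : ℝ) θr).indicator (fun r' => Real.sqrt (3 * θs / θr) * (1 - r' / θr)) r)
    (h : ℝ) (hh0 : 0 ≤ h) (hhr : h ≤ θr) :
    (∫ r in Ioi (0 : ℝ), g r * g (r + h)) =
      θs * (1 - (3 / 2) * (h / θr) + (1 / 2) * (h / θr) ^ 3) := by
  set c := Real.sqrt (3 * θs / θr) with hc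
  have hθr' : θr ≠ 0 := ne_of_gt hθr
  have hc2 : c ^ 2 = 3 * θs / θr := Real.sq_sqrt (by positivity)
  set A := c ^ 2 * (1 - h / θr) with hA
  set B := c ^ 2 * (-(1 / θr) + h / (2 * θr ^ 2)) with hB
  set C := c ^ 2 / (3 * θr ^ 2) with hC
  set a := θr - h with ha
  have ha0 : 0 ≤ a := by simp [ha]; linarith
  have step1 : (∫ r in Ioi (0 : ℝ), g r * g (r + h)) =
      ∫ r in Ioi (0 : ℝ),
        (Ioc (0 : ℝ) a).indicator (fun r => A + B * (2 * r) + C * (3 * r ^ 2)) r := by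
    apply setIntegral_congr_fun measurableSet_Ioi
    intro r hr
    simp only [mem_Ioi] at hr
    show g r * g (r + h) = _
    by_cases hra : r ≤ a
    · have h1 : r ∈ Icc (0 : ℝ) θr := ⟨le_of_lt hr, by linarith⟩
      have h2 : r + h ∈ Icc (0 : ℝ) θr := ⟨by linarith, by linarith [hra]⟩
      rw [hg r, hg (r + h), indicator_of_mem h1, indicator_of_mem h2,
        indicator_of_mem (mem_Ioc.mpr ⟨hr, hra⟩)]
      have : c * (1 - r / θr) * (c * (1 - (r + h) / θr)) =
          c ^ 2 * ((1 - r / θr) * (1 - (r + h) / θr)) := by ring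
      rw [this, hA, hB, hC]
      field_simp
      ring
    · have h2 : r + h ∉ Icc (0 : ℝ) θr := by
        intro hmem
        exact hra (by linarith [hmem.2])
      rw [hg (r + h), indicator_of_notMem h2,
        indicator_of_notMem (fun hm => hra hm.2)]
      ring
  rw [step1, setIntegral_indicator measurableSet_Ioc,
    inter_eq_self_of_subset_right Ioc_subset_Ioi_self,
    ← intervalIntegral.integral_of_le ha0]
  have deriv : ∀ r : ℝ, HasDerivAt (fun r => A * r + B * r ^ 2 + C * r ^ 3)
      (A + B * (2 * r) + C * (3 * r ^ 2)) r := by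
    intro r
    have h1 : HasDerivAt (fun r : ℝ => A * r) A r := by
      simpa using (hasDerivAt_id r).const_mul A
    have h2 : HasDerivAt (fun r : ℝ => B * r ^ 2) (B * (2 * r)) r := by
      simpa using (hasDerivAt_pow 2 r).const_mul B
    have h3 : HasDerivAt (fun r : ℝ => C * r ^ 3) (C * (3 * r ^ 2)) r := by
      simpa using (hasDerivAt_pow 3 r).const_mul C
    exact (h1.add h2).add h3
  have hint : (∫ r in (0:ℝ)..a, A + B * (2 * r) + C * (3 * r ^ 2)) =
      (A * a + B * a ^ 2 + C * a ^ 3) - (A * 0 + B * 0 ^ 2 + C * 0 ^ 3) := by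
    apply intervalIntegral.integral_eq_sub_of_hasDerivAt (fun r _ => deriv r)
    apply Continuous.intervalIntegrable
    fun_prop
  rw [hint, hA, hB, hC, hc2, ha]
  field_simp
  ring

/-- For the 'spherical' moving-average kernel
`g(r) = √(3θₛ/θᵣ)(1 − r/θᵣ)·𝟙_{[0,θᵣ]}(r)`, normalized so that `∫₀^∞ g² = θₛ`,
the induced covariance is `∫₀^∞ g(r)g(r+h) dr = θₛ(1 − (3/2)(h/θᵣ) + (1/2)(h/θᵣ)³)`
for `0 ≤ h ≤ θᵣ` and `0` for `h > θᵣ`. -/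
theorem stmt_8 (θs θr : ℝ) (hθs : 0 < θs) (hθr : 0 < θr)
    (g : ℝ → ℝ)
    (hg : ∀ r : ℝ,
      g r = (Icc (0 : ℝ) θr).indicator (fun r' => Real.sqrt (3 * θs / θr) * (1 - r' / θr)) r) :
    (∫ r in Ioi (0 : ℝ), g r ^ 2) = θs ∧
    (∀ h : ℝ, 0 ≤ h → h ≤ θr →
      (∫ r in Ioi (0 : ℝ), g r * g (r + h)) =
        θs * (1 - (3 / 2) * (h / θr) + (1 / 2) * (h / θr) ^ 3)) ∧
    (∀ h : ℝ, θr < h → (∫ r in Ioi (0 : ℝ), g r * g (r + h)) = 0) := by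
  refine ⟨?_, fun h hh0 hhr => cov_helper θs θr hθs hθr g hg h hh0 hhr, ?_⟩
  · have := cov_helper θs θr hθs hθr g hg 0 le_rfl (le_of_lt hθr)
    simp only [add_zero, zero_div] at this
    rw [show (∫ r in Ioi (0 : ℝ), g r ^ 2) = ∫ r in Ioi (0 : ℝ), g r * g r by
      simp [sq]]
    rw [this]; ring
  · intro h hh
    calc (∫ r in Ioi (0:ℝ), g r * g (r + h)) = ∫ _ in Ioi (0:ℝ), (0:ℝ) := by
          apply setIntegral_congr_fun measurableSet_Ioi
          intro r hr
          simp only [mem_Ioi] at hr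
          have hn : r + h ∉ Icc (0 : ℝ) θr := fun hm => by linarith [hm.2]
          show g r * g (r + h) = 0
          rw [hg (r + h), indicator_of_notMem hn, mul_zero]
      _ = 0 := by simp
end
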